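/- For all natural numbers n, 7·j³ₙ = 2^(n+3) + 3·Vₙ, where Vₙ = 2 if n ≡ 0 (mod 3), Vₙ = −3 if n ≡ 1 (mod 3), and Vₙ = 1 if n ≡ 2 (mod 3). -/
import Mathlib


def jL3 : ℕ → ℤ
  | 0 => 2
  | 1 => 1
  | 2 => 5
  | n + 3 => jL3 (n + 2) + jL3 (n + 1) + 2 * jL3 n

def V3 (n : ℕ) : ℤ := if n % 3 = 0 then 2 else if n % 3 = 1 then -3 else 1

theorem stmt10 (n : ℕ) : 7 * jL3 n = 2 ^ (n + 3) + 3 * V3 n := by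
  induction n using Nat.strong_induction_on with
  | _ n ih =>
    match n with
    | 0 => norm_num [jL3, V3]
    | 1 => norm_num [jL3, V3]
    | 2 => norm_num [jL3, V3]
    | m + 3 =>
      have h0 := ih m (by omega)
      have h1 := ih (m + 1) (by omega)
      have h2 := ih (m + 2) (by omega)
      have hV : V3 (m + 2) + V3 (m + 1) + 2 * V3 m = V3 (m + 3) := by
        unfold V3
        have hlt : m % 3 < 3 := Nat.mod_lt _ (by norm_num)
        have e1 : (m + 1) % 3 = (m % 3 + 1) % 3 := by omega
        have e2 : (m + 2) % 3 = (m % 3 + 2) % 3 := by omega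
        have e3 : (m + 3) % 3 = m % 3 := by omega
        rw [e1, e2, e3]
        interval_cases h : m % 3 <;> norm_num
      have hp : (2 : ℤ) ^ (m + 2 + 3) + 2 ^ (m + 1 + 3) + 2 * 2 ^ (m + 3) = 2 ^ (m + 3 + 3) := by
        ring
      rw [jL3]
      linarith
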